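/- arXiv:2211.15291 — 8 statements merged into one kernel-verified Lean document; each statement's English description precedes it below -/
import Mathlib

section
/- Let n ≥ 2, let λ_0, …, λ_n be pairwise distinct complex numbers, and let c_0, …, c_n be nonzero complex numbers. Suppose x = (x_0, …, x_n) ∈ ℂ^{n+1} is nonzero and satisfies ∑_{i=0}^n c_i λ_i^k x_i² = 0 for every k = 0, …, n−2. Then x_i ≠ 0 for at least n of the indices i ∈ {0, …, n}; that is, at most one coordinate of x vanishes. -/
/-- Let `n ≥ 2`, let `λ_0, …, λ_n` be pairwise distinct complex numbers and
`c_0, …, c_n` nonzero complex numbers.  If `x ∈ ℂ^{n+1}` is nonzero and satisfies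
`∑ i, c_i λ_i^k x_i² = 0` for every `k = 0, …, n-2`, then `x_i ≠ 0` for at least `n` of the
indices `i`; that is, at most one coordinate of `x` vanishes. -/
theorem stmt_2 (n : ℕ) (hn : 2 ≤ n) (lam c : Fin (n + 1) → ℂ)
    (hlam : Function.Injective lam) (hc : ∀ i, c i ≠ 0)
    (x : Fin (n + 1) → ℂ) (hx : x ≠ 0)
    (hsol : ∀ k < n - 1, ∑ i, c i * lam i ^ k * x i ^ 2 = 0) :
    n ≤ (Finset.univ.filter fun i => x i ≠ 0).card ∧
    (Finset.univ.filter fun i => x i = 0).card ≤ 1 := by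
  classical
  have key : (Finset.univ.filter fun i => x i = 0).card ≤ 1 := by
    by_contra h
    push_neg at h
    rw [Finset.one_lt_card_iff] at h
    obtain ⟨i, j, hi, hj, hij⟩ := h
    simp only [Finset.mem_filter, Finset.mem_univ, true_and] at hi hj
    set S : Finset (Fin (n + 1)) := (Finset.univ.erase i).erase j with hS
    have hjmem : j ∈ Finset.univ.erase i := by
      simp [Finset.mem_erase, hij.symm]
    have hScard : S.card = n - 1 := by
      rw [hS, Finset.card_erase_of_mem hjmem, Finset.card_erase_of_mem (by simp),
        Finset.card_univ, Fintype.card_fin]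
      omega
    have hnotS : ∀ s : Fin (n + 1), s ∉ S → x s = 0 := by
      intro s hs
      rw [hS] at hs
      simp only [Finset.mem_erase, Finset.mem_univ, and_true, not_and_or, not_not] at hs
      rcases hs with rfl | rfl
      · exact hj
      · exact hi
    let e : Fin (n - 1) ≃ {s // s ∈ S} := (finCongr hScard.symm).trans S.equivFin.symm
    let f : Fin (n - 1) → Fin (n + 1) := fun t => (e t : Fin (n + 1))
    have hfS : ∀ t, f t ∈ S := fun t => (e t).2
    have hfinj : Function.Injective f := fun a b hab =>
      e.injective (Subtype.ext hab)
    set v : Fin (n - 1) → ℂ := fun t => lam (f t) with hvdef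
    have hv : Function.Injective v := fun a b hab => hfinj (hlam hab)
    set A : Matrix (Fin (n - 1)) (Fin (n - 1)) ℂ := (Matrix.vandermonde v).transpose with hA
    have hdet : A.det ≠ 0 := by
      rw [hA, Matrix.det_transpose, Matrix.det_vandermonde]
      rw [Finset.prod_ne_zero_iff]
      intro a _
      rw [Finset.prod_ne_zero_iff]
      intro b hb
      have hab : b ≠ a := (Finset.mem_Ioi.mp hb).ne'
      exact sub_ne_zero.mpr fun hvb => hab (hv hvb)
    set y : Fin (n - 1) → ℂ := fun t => c (f t) * x (f t) ^ 2 with hy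
    have hAy : A.mulVec y = 0 := by
      funext k
      have h1 : (A.mulVec y) k = ∑ t : Fin (n - 1), v t ^ (k : ℕ) * y t := by
        simp [Matrix.mulVec, dotProduct, hA, Matrix.vandermonde]
      have h2 : ∑ t : Fin (n - 1), v t ^ (k : ℕ) * y t
          = ∑ s ∈ S, lam s ^ (k : ℕ) * (c s * x s ^ 2) := by
        rw [← Finset.sum_attach S (fun s => lam s ^ (k : ℕ) * (c s * x s ^ 2))]
        exact Equiv.sum_comp e (fun s : {s // s ∈ S} =>
          lam (s : Fin (n + 1)) ^ (k : ℕ) * (c (s : Fin (n + 1)) * x (s : Fin (n + 1)) ^ 2))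
      have h3 : ∑ s ∈ S, lam s ^ (k : ℕ) * (c s * x s ^ 2)
          = ∑ s, c s * lam s ^ (k : ℕ) * x s ^ 2 := by
        rw [Finset.sum_subset (Finset.subset_univ S)]
        · exact Finset.sum_congr rfl fun s _ => by ring
        · intro s _ hs
          rw [hnotS s hs]
          ring
      have h4 := hsol (k : ℕ) k.isLt
      simp only [Pi.zero_apply]
      rw [h1, h2, h3, h4]
    have hy0 : y = 0 := by
      have hU : IsUnit A.det := isUnit_iff_ne_zero.mpr hdet
      calc y = (A⁻¹ * A).mulVec y := by rw [Matrix.nonsing_inv_mul A hU, Matrix.one_mulVec]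
        _ = A⁻¹.mulVec (A.mulVec y) := by rw [Matrix.mulVec_mulVec]
        _ = 0 := by rw [hAy, Matrix.mulVec_zero]
    have hxS : ∀ s ∈ S, x s = 0 := by
      intro s hs
      have h0 := congrFun hy0 (e.symm ⟨s, hs⟩)
      have hfe : f (e.symm ⟨s, hs⟩) = s := by
        simp [f, Equiv.apply_symm_apply]
      rw [hy] at h0
      simp only [hfe, Pi.zero_apply] at h0
      have := mul_eq_zero.mp h0
      rcases this with hcs | hxs
      · exact absurd hcs (hc s)
      · exact pow_eq_zero_iff (by norm_num) |>.mp hxs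
    apply hx
    funext s
    by_cases hsS : s ∈ S
    · exact hxS s hsS
    · exact hnotS s hsS
  refine ⟨?_, key⟩
  have h2 : (Finset.univ.filter fun i => x i ≠ 0)
      = Finset.univ \ (Finset.univ.filter fun i => x i = 0) := by
    ext s; simp
  rw [h2, Finset.card_sdiff_of_subset (Finset.filter_subset _ _), Finset.card_univ, Fintype.card_fin]
  omega
end

section
/- Let n ≥ 2, let λ_0, …, λ_n be pairwise distinct complex numbers, and let c_0, …, c_n be nonzero complex numbers. Suppose x = (x_0, …, x_n) ∈ ℂ^{n+1} is nonzero and satisfies ∑_{i=0}^n c_i λ_i^k x_i² = 0 for every k = 0, …, n−2. Then the (n−1) × (n+1) matrix J with entries J_{k,i} = c_i λ_i^k x_i (0 ≤ k ≤ n−2, 0 ≤ i ≤ n) has rank n−1. -/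
/-!
The weights `w i = c i * x i ^ 2` have vanishing moments `∑ w i λ_i ^ k` for `k < n - 1`, so they
pair to zero with every polynomial of degree `< n - 1`. Pairing with the Lagrange basis polynomial
of the support of `x` at one of its points shows that this support has at least `n` points.
A row relation `∑ g_k J_k = 0` says that `∑ g_k X ^ k` vanishes at `λ_i` for every `i` in the
support, so `g` is killed by an `(n - 1) × (n - 1)` Vandermonde matrix with distinct nodes.
-/

open Polynomial Finset

variable {ι : Type*} [Fintype ι]

theorem sum_mul_eval_eq_zero_of_moments_eq_zero {R : Type*} [CommRing R] {w lam : ι → R} {m : ℕ}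
    (hw : ∀ k < m, ∑ i, w i * lam i ^ k = 0) {Q : R[X]} (hQ : Q.natDegree < m) :
    ∑ i, w i * Q.eval (lam i) = 0 :=
  calc ∑ i, w i * Q.eval (lam i)
      = ∑ k ∈ range m, Q.coeff k * ∑ i, w i * lam i ^ k := by
        simp only [eval_eq_sum_range' hQ, mul_sum]
        rw [sum_comm]
        exact sum_congr rfl fun _ _ => sum_congr rfl fun _ _ => by ring
    _ = 0 := sum_eq_zero fun k hk => by rw [hw k (mem_range.mp hk), mul_zero]

theorem lt_card_support_of_moments_eq_zero {K : Type*} [Field K] [DecidableEq K] [DecidableEq ι]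
    {w lam : ι → K} {m : ℕ} (hlam : Function.Injective lam) (hw0 : w ≠ 0)
    (hw : ∀ k < m, ∑ i, w i * lam i ^ k = 0) : m < #{i | w i ≠ 0} := by
  set S : Finset ι := {i | w i ≠ 0}
  obtain ⟨j, hj⟩ : ∃ j, w j ≠ 0 := Function.ne_iff.mp hw0
  have hjS : j ∈ S := mem_filter.mpr ⟨mem_univ j, hj⟩
  have hinj : Set.InjOn lam S := hlam.injOn
  by_contra! hcard
  have hdeg : (Lagrange.basis S lam j).natDegree < m := by
    have := card_pos.mpr ⟨j, hjS⟩
    rw [Lagrange.natDegree_basis hinj hjS]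
    omega
  have hpairing := sum_mul_eval_eq_zero_of_moments_eq_zero hw hdeg
  rw [sum_eq_single j _ (by simp), Lagrange.eval_basis_self hinj hjS, mul_one] at hpairing
  · exact hj hpairing
  · intro i _ hij
    by_cases hi : w i = 0
    · rw [hi, zero_mul]
    · rw [Lagrange.eval_basis_of_ne hij.symm (mem_filter.mpr ⟨mem_univ i, hi⟩), mul_zero]

theorem linearIndependent_of_le_card_support {K : Type*} [Field K] [DecidableEq K] {d lam : ι → K}
    {m : ℕ} (hlam : Function.Injective lam) (hm : m ≤ #{i | d i ≠ 0}) :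
    LinearIndependent K (Matrix.of fun (k : Fin m) i => d i * lam i ^ (k : ℕ)) := by
  obtain ⟨e⟩ : Nonempty (Fin m ↪ {i // d i ≠ 0}) :=
    Function.Embedding.nonempty_of_card_le (by simpa [Fintype.card_subtype] using hm)
  refine Fintype.linearIndependent_iff.mpr fun g hg => congrFun ?_
  refine Matrix.eq_zero_of_forall_index_sum_mul_pow_eq_zero
    (f := fun j => lam (e j)) (hlam.comp (Subtype.val_injective.comp e.injective)) fun j => ?_
  have hrow := congrFun hg (e j)
  simp only [Finset.sum_apply, Pi.smul_apply, Matrix.of_apply, smul_eq_mul, Pi.zero_apply] at hrow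
  refine (mul_eq_zero.mp ?_).resolve_left (e j).2
  rw [mul_sum]
  exact (sum_congr rfl fun _ _ => by ring).trans hrow

theorem stmt_3_general (n : ℕ) (lam c : Fin (n + 1) → ℂ)
    (hlam : Function.Injective lam) (hc : ∀ i, c i ≠ 0)
    (x : Fin (n + 1) → ℂ) (hx : x ≠ 0)
    (hsol : ∀ k < n - 1, ∑ i, c i * lam i ^ k * x i ^ 2 = 0) :
    (Matrix.of fun (k : Fin (n - 1)) (i : Fin (n + 1)) =>
        c i * lam i ^ (k : ℕ) * x i).rank = n - 1 := by
  classical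
  have hw0 : (fun i => c i * x i ^ 2) ≠ 0 := fun h =>
    hx (funext fun i => by simpa [hc i] using congrFun h i)
  have hsupport : n - 1 < #{i | c i * x i ^ 2 ≠ 0} :=
    lt_card_support_of_moments_eq_zero hlam hw0 fun k hk => by
      simpa only [mul_right_comm] using hsol k hk
  have hsupport_eq : #{i | c i * x i ^ 2 ≠ 0} = #{i | c i * x i ≠ 0} := by
    simp only [ne_eq, mul_eq_zero, pow_eq_zero_iff two_ne_zero, hc, false_or]
  have hJ : (Matrix.of fun (k : Fin (n - 1)) (i : Fin (n + 1)) => c i * lam i ^ (k : ℕ) * x i) =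
      Matrix.of fun (k : Fin (n - 1)) i => c i * x i * lam i ^ (k : ℕ) := by
    ext
    simp only [Matrix.of_apply]
    ring
  rw [hJ, (linearIndependent_of_le_card_support hlam (hsupport_eq ▸ hsupport).le).rank_matrix,
    Fintype.card_fin]

/-- Let `n ≥ 2`, let `λ_0, …, λ_n` be pairwise distinct complex numbers and
`c_0, …, c_n` nonzero complex numbers.  If `x ∈ ℂ^{n+1}` is nonzero and satisfies
`∑ i, c_i λ_i^k x_i² = 0` for every `k = 0, …, n-2`, then the `(n-1) × (n+1)` matrix `J`
with entries `J_{k,i} = c_i λ_i^k x_i` has rank `n - 1`. -/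
theorem stmt_3 (n : ℕ) (hn : 2 ≤ n) (lam c : Fin (n + 1) → ℂ)
    (hlam : Function.Injective lam) (hc : ∀ i, c i ≠ 0)
    (x : Fin (n + 1) → ℂ) (hx : x ≠ 0)
    (hsol : ∀ k < n - 1, ∑ i, c i * lam i ^ k * x i ^ 2 = 0) :
    (Matrix.of fun (k : Fin (n - 1)) (i : Fin (n + 1)) =>
        c i * lam i ^ (k : ℕ) * x i).rank = n - 1 :=
  stmt_3_general n lam c hlam hc x hx hsol
end

section
/- Let n ≥ 2 and let λ_0, …, λ_n be pairwise distinct complex numbers. Fix an index i ∈ {0, …, n}. Then the set of points [x_0 : ⋯ : x_n] of the Humbert–Edge curve C of type n with x_i = 0 is finite and has exactly 2^{n−1} elements. -/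
/-- The Humbert–Edge curve of type `n` attached to the pairwise distinct complex numbers
`λ_0, …, λ_n`: the set of points `[x_0 : ⋯ : x_n]` of `ℙ(ℂ^{n+1})` whose homogeneous
coordinates satisfy `∑ i, λ_i^k x_i² = 0` for every `k = 0, …, n-2`.  (The defining
condition is homogeneous, so it can be tested on the chosen representative `P.rep`.) -/
def humbertEdge (n : ℕ) (lam : Fin (n + 1) → ℂ) :
    Set (Projectivization ℂ (Fin (n + 1) → ℂ)) :=
  {P | ∀ k < n - 1, ∑ i, lam i ^ k * P.rep i ^ 2 = 0}

open Polynomial Finset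

/-- If `y` is orthogonal to the powers `lam^k`, `k < s.card - 1`, on `s`, then
`y a * ∏_{m∈s, m≠a} (lam a - lam m)` is independent of `a ∈ s`. -/
lemma keyA {N : ℕ} (s : Finset (Fin N)) (lam : Fin N → ℂ) (y : Fin N → ℂ)
    (hy : ∀ k < s.card - 1, ∑ j ∈ s, lam j ^ k * y j = 0)
    {a b : Fin N} (ha : a ∈ s) (hb : b ∈ s) :
    y a * ∏ m ∈ s.erase a, (lam a - lam m) =
      y b * ∏ m ∈ s.erase b, (lam b - lam m) := by
  rcases eq_or_ne a b with rfl | hab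
  · rfl
  have hb' : b ∈ s.erase a := mem_erase.mpr ⟨hab.symm, hb⟩
  have ha' : a ∈ s.erase b := mem_erase.mpr ⟨hab, ha⟩
  have hs2 : 2 ≤ s.card := Finset.one_lt_card.mpr ⟨a, ha, b, hb, hab⟩
  set t : Finset (Fin N) := (s.erase a).erase b with ht
  set p : ℂ[X] := ∏ m ∈ t, (X - C (lam m)) with hp
  have hdeg : p.natDegree = t.card := by
    rw [hp, natDegree_prod_of_monic _ _ (fun m _ => monic_X_sub_C _)]
    simp
  have htcard : t.card = s.card - 2 := by
    rw [ht, card_erase_of_mem hb', card_erase_of_mem ha]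
    omega
  have hdeg' : p.natDegree < s.card - 1 := by omega
  have heval : ∀ x : ℂ, p.eval x = ∏ m ∈ t, (x - lam m) := by
    intro x; rw [hp, eval_prod]; simp
  -- the weighted sum of evaluations vanishes
  have hsum : ∑ j ∈ s, p.eval (lam j) * y j = 0 := by
    have : ∀ j ∈ s, p.eval (lam j) * y j
        = ∑ k ∈ range (s.card - 1), p.coeff k * (lam j ^ k * y j) := by
      intro j _
      rw [eval_eq_sum_range' hdeg', Finset.sum_mul]
      exact Finset.sum_congr rfl fun k _ => by ring
    rw [Finset.sum_congr rfl this, Finset.sum_comm]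
    refine Finset.sum_eq_zero fun k hk => ?_
    rw [← Finset.mul_sum, hy k (mem_range.mp hk), mul_zero]
  -- only the `a` and `b` terms survive
  have hzero : ∀ j ∈ t, p.eval (lam j) * y j = 0 := by
    intro j hj
    rw [heval, Finset.prod_eq_zero hj (by ring), zero_mul]
  have hsplit : p.eval (lam a) * y a + p.eval (lam b) * y b = 0 := by
    have h1 := Finset.add_sum_erase s (fun j => p.eval (lam j) * y j) ha
    have h2 := Finset.add_sum_erase (s.erase a) (fun j => p.eval (lam j) * y j) hb'
    rw [Finset.sum_eq_zero hzero] at h2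
    rw [← h1, ← h2] at hsum
    simpa using hsum
  have hpa : ∏ m ∈ s.erase a, (lam a - lam m) = (lam a - lam b) * p.eval (lam a) := by
    rw [heval, ← Finset.mul_prod_erase (s.erase a) _ hb']
  have hpb : ∏ m ∈ s.erase b, (lam b - lam m) = (lam b - lam a) * p.eval (lam b) := by
    have ht2 : t = (s.erase b).erase a := by rw [ht, Finset.erase_right_comm]
    rw [heval, ht2, ← Finset.mul_prod_erase (s.erase b) _ ha']
  rw [hpa, hpb]
  linear_combination (lam a - lam b) * hsplit

lemma sq_cases {x y : ℂ} (h : x ^ 2 = y ^ 2) : x = y ∨ x = -y := by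
  have h0 : (x - y) * (x + y) = 0 := by linear_combination h
  rcases mul_eq_zero.mp h0 with h1 | h1
  · exact Or.inl (sub_eq_zero.mp h1)
  · exact Or.inr (eq_neg_of_add_eq_zero_left h1)

/-- The explicit reciprocal-product vector lies in the kernel of the Vandermonde system. -/
lemma keyB (n : ℕ) (hn : 2 ≤ n) (lam : Fin (n + 1) → ℂ)
    (hlam : Function.Injective lam) (i : Fin (n + 1)) :
    ∀ k < n - 1, ∑ j ∈ Finset.univ.erase i,
      lam j ^ k * (∏ m ∈ (Finset.univ.erase i).erase j, (lam j - lam m))⁻¹ = 0 := by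
  classical
  set s : Finset (Fin (n + 1)) := Finset.univ.erase i with hs
  have hscard : s.card = n := by
    rw [hs, Finset.card_erase_of_mem (Finset.mem_univ i)]
    simp
  have hCne : ∀ j, (∏ m ∈ s.erase j, (lam j - lam m)) ≠ 0 := by
    intro j
    refine Finset.prod_ne_zero_iff.mpr fun m hm => sub_ne_zero.mpr fun h => ?_
    exact (Finset.mem_erase.mp hm).1 (hlam h).symm
  obtain ⟨j₀, hj₀s⟩ : s.Nonempty := Finset.card_pos.mp (by omega)
  -- a linear map recording the n - 1 equations together with evaluation at i
  let L : (Fin (n + 1) → ℂ) →ₗ[ℂ] (Fin n → ℂ) :=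
    LinearMap.pi (fun k : Fin n =>
      if (k : ℕ) < n - 1 then ∑ j ∈ s, lam j ^ (k : ℕ) • LinearMap.proj j
      else LinearMap.proj i)
  have hL : ∀ y (k : Fin n), L y k =
      if (k : ℕ) < n - 1 then ∑ j ∈ s, lam j ^ (k : ℕ) * y j else y i := by
    intro y k
    by_cases h : (k : ℕ) < n - 1 <;>
      simp [L, LinearMap.pi_apply, h, LinearMap.sum_apply, LinearMap.smul_apply,
        smul_eq_mul]
  have hninj : ¬ Function.Injective L := by
    intro h
    have := LinearMap.finrank_le_finrank_of_injective h
    simp only [Module.finrank_pi, Fintype.card_fin] at this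
    omega
  have hker : LinearMap.ker L ≠ ⊥ := by
    rwa [ne_eq, LinearMap.ker_eq_bot]
  obtain ⟨y₀, hy₀mem, hy₀ne⟩ := Submodule.exists_mem_ne_zero_of_ne_bot hker
  have hy₀ : L y₀ = 0 := LinearMap.mem_ker.mp hy₀mem
  have hy₀i : y₀ i = 0 := by
    have h1 := congrFun hy₀ ⟨n - 1, by omega⟩
    rw [hL] at h1
    simpa using h1
  have heqs : ∀ k < n - 1, ∑ j ∈ s, lam j ^ k * y₀ j = 0 := by
    intro k hk
    have h1 := congrFun hy₀ ⟨k, by omega⟩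
    rw [hL] at h1
    simpa [hk] using h1
  have hconst : ∀ j ∈ s, y₀ j * ∏ m ∈ s.erase j, (lam j - lam m)
      = y₀ j₀ * ∏ m ∈ s.erase j₀, (lam j₀ - lam m) := by
    intro j hj
    exact keyA s lam y₀ (by rw [hscard]; exact heqs) hj hj₀s
  set t : ℂ := y₀ j₀ * ∏ m ∈ s.erase j₀, (lam j₀ - lam m) with ht
  have htne : t ≠ 0 := by
    intro h0
    apply hy₀ne
    funext j
    rcases eq_or_ne j i with rfl | hji
    · exact hy₀i
    · have hjs : j ∈ s := Finset.mem_erase.mpr ⟨hji, Finset.mem_univ j⟩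
      have h1 := hconst j hjs
      rw [h0, mul_eq_zero] at h1
      rcases h1 with h1 | h1
      · exact h1
      · exact absurd h1 (hCne j)
  intro k hk
  have hinv : ∀ j ∈ s, (∏ m ∈ s.erase j, (lam j - lam m))⁻¹ = t⁻¹ * y₀ j := by
    intro j hj
    have h1 := hconst j hj
    rw [ht] at h1
    field_simp [hCne j, htne]
    linear_combination -h1
  calc ∑ j ∈ s, lam j ^ k * (∏ m ∈ s.erase j, (lam j - lam m))⁻¹
      = ∑ j ∈ s, t⁻¹ * (lam j ^ k * y₀ j) := by
        refine Finset.sum_congr rfl fun j hj => ?_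
        rw [hinv j hj]; ring
    _ = t⁻¹ * ∑ j ∈ s, lam j ^ k * y₀ j := by rw [Finset.mul_sum]
    _ = 0 := by rw [heqs k hk, mul_zero]

/-- Let `n ≥ 2` and `λ_0, …, λ_n` pairwise distinct complex numbers, and fix
an index `i`.  Then the set of points of the Humbert–Edge curve `C` of type `n` whose `i`-th
homogeneous coordinate vanishes is finite, with exactly `2^{n-1}` elements. -/
theorem stmt_4 (n : ℕ) (hn : 2 ≤ n) (lam : Fin (n + 1) → ℂ)
    (hlam : Function.Injective lam) (i : Fin (n + 1)) :
    {P ∈ humbertEdge n lam | P.rep i = 0}.Finite ∧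
    {P ∈ humbertEdge n lam | P.rep i = 0}.ncard = 2 ^ (n - 1) := by
  classical
  set s : Finset (Fin (n + 1)) := Finset.univ.erase i with hs
  have hscard : s.card = n := by
    rw [hs, Finset.card_erase_of_mem (Finset.mem_univ i)]; simp
  have hCne : ∀ j, (∏ m ∈ s.erase j, (lam j - lam m)) ≠ 0 := by
    intro j
    refine Finset.prod_ne_zero_iff.mpr fun m hm => sub_ne_zero.mpr fun h => ?_
    exact (Finset.mem_erase.mp hm).1 (hlam h).symm
  obtain ⟨j₀, hj₀s⟩ : s.Nonempty := Finset.card_pos.mp (by omega)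
  have hj₀i : j₀ ≠ i := (Finset.mem_erase.mp hj₀s).1
  -- square roots of the reciprocal products
  have hwex : ∀ j, ∃ r : ℂ, r ^ 2 = (∏ m ∈ s.erase j, (lam j - lam m))⁻¹ :=
    fun j => IsAlgClosed.exists_pow_nat_eq _ two_pos
  choose w hw2 using hwex
  have hwne : ∀ j, w j ≠ 0 := by
    intro j h
    apply hCne j
    have h2 := hw2 j
    rw [h] at h2
    simpa [eq_comm, inv_eq_zero] using h2
  have hB := keyB n hn lam hlam i
  rw [← hs] at hB
  -- sign vectors to candidate representative vectors
  set Φ : (Fin (n + 1) → ℤˣ) → (Fin (n + 1) → ℂ) :=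
    fun ε j => if j = i then 0 else ((ε j : ℤ) : ℂ) * w j with hΦ
  have hΦne : ∀ ε, Φ ε ≠ 0 := by
    intro ε h
    have h0 := congrFun h j₀
    rcases Int.units_eq_one_or (ε j₀) with h1 | h1 <;>
      simp [hΦ, hj₀i, h1, hwne j₀] at h0
  have hΦeq : ∀ ε, ∀ k < n - 1, ∑ j, lam j ^ k * (Φ ε j) ^ 2 = 0 := by
    intro ε k hk
    have hsum : ∑ j, lam j ^ k * (Φ ε j) ^ 2 = ∑ j ∈ s, lam j ^ k * (Φ ε j) ^ 2 := by
      rw [← Finset.sum_erase_add Finset.univ _ (Finset.mem_univ i), ← hs]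
      simp [hΦ]
    rw [hsum, ← hB k hk]
    refine Finset.sum_congr rfl fun j hj => ?_
    have hji : j ≠ i := (Finset.mem_erase.mp hj).1
    have hval : (Φ ε j) ^ 2 = (∏ m ∈ s.erase j, (lam j - lam m))⁻¹ := by
      simp only [hΦ, if_neg hji, mul_pow, ← hw2 j]
      rcases Int.units_eq_one_or (ε j) with h1 | h1 <;> simp [h1]
    rw [hval]
  -- constructed points lie in the locus
  have hmem : ∀ ε, Projectivization.mk ℂ (Φ ε) (hΦne ε) ∈
      {P ∈ humbertEdge n lam | P.rep i = 0} := by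
    intro ε
    set P := Projectivization.mk ℂ (Φ ε) (hΦne ε) with hP
    obtain ⟨a, haeq⟩ := (Projectivization.mk_eq_mk_iff ℂ _ _ P.rep_nonzero (hΦne ε)).mp
      ((Projectivization.mk_rep P).trans hP)
    have hrep : ∀ j, P.rep j = (a : ℂ) * Φ ε j := by
      intro j
      rw [← haeq]
      simp [Units.smul_def]
    refine ⟨?_, ?_⟩
    · intro k hk
      have : ∑ j, lam j ^ k * P.rep j ^ 2 = (a : ℂ) ^ 2 * ∑ j, lam j ^ k * (Φ ε j) ^ 2 := by
        rw [Finset.mul_sum]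
        exact Finset.sum_congr rfl fun j _ => by rw [hrep j]; ring
      rw [this, hΦeq ε k hk, mul_zero]
    · rw [hrep i]; simp [hΦ]
  -- the parametrizing map
  set F : {ε : Fin (n + 1) → ℤˣ // ε i = 1 ∧ ε j₀ = 1} →
      Projectivization ℂ (Fin (n + 1) → ℂ) :=
    fun ε => Projectivization.mk ℂ (Φ ε.1) (hΦne ε.1) with hF
  have hFinj : Function.Injective F := by
    rintro ⟨ε, hεi, hεj₀⟩ ⟨ε', hε'i, hε'j₀⟩ h
    obtain ⟨a, haeq⟩ := (Projectivization.mk_eq_mk_iff ℂ _ _ (hΦne ε) (hΦne ε')).mp h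
    have hj := congrFun haeq j₀
    simp [hΦ, if_neg hj₀i, hεj₀, hε'j₀, Units.smul_def] at hj
    have ha1 : (a : ℂ) = 1 := by
      have := mul_right_cancel₀ (hwne j₀) (hj.trans (one_mul (w j₀)).symm)
      simpa using this
    apply Subtype.ext
    funext j
    rcases eq_or_ne j i with rfl | hji
    · show ε j = ε' j
      rw [hεi, hε'i]
    · show ε j = ε' j
      have h2 : (a : ℂ) * (((ε' j : ℤ) : ℂ) * w j) = ((ε j : ℤ) : ℂ) * w j := by
        have h5 := congrFun haeq j
        simpa only [hΦ, Pi.smul_apply, Units.smul_def, smul_eq_mul, if_neg hji] using h5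
      rw [ha1, one_mul] at h2
      have h3 : ((ε' j : ℤ) : ℂ) = ((ε j : ℤ) : ℂ) := mul_right_cancel₀ (hwne j) h2
      have h4 : (ε' j : ℤ) = (ε j : ℤ) := by exact_mod_cast h3
      exact (Units.ext h4).symm
  -- every point of the locus is obtained
  have hcover : ∀ P ∈ {P ∈ humbertEdge n lam | P.rep i = 0}, ∃ ε, F ε = P := by
    rintro P ⟨hPmem, hPi⟩
    have hy : ∀ k < s.card - 1, ∑ j ∈ s, lam j ^ k * (P.rep j ^ 2) = 0 := by
      intro k hk
      have hk' : k < n - 1 := by rwa [hscard] at hk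
      have h0 := hPmem k hk'
      rw [← Finset.sum_erase_add Finset.univ _ (Finset.mem_univ i), ← hs, hPi] at h0
      simpa using h0
    have hconst : ∀ j ∈ s, P.rep j ^ 2 * ∏ m ∈ s.erase j, (lam j - lam m)
        = P.rep j₀ ^ 2 * ∏ m ∈ s.erase j₀, (lam j₀ - lam m) :=
      fun j hj => keyA s lam (fun j => P.rep j ^ 2) hy hj hj₀s
    have ht'ne : P.rep j₀ ^ 2 * (∏ m ∈ s.erase j₀, (lam j₀ - lam m)) ≠ 0 := by
      intro h0
      apply P.rep_nonzero
      funext j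
      rcases eq_or_ne j i with rfl | hji
      · exact hPi
      · have hjs : j ∈ s := Finset.mem_erase.mpr ⟨hji, Finset.mem_univ j⟩
        have h1 := hconst j hjs
        rw [h0, mul_eq_zero] at h1
        rcases h1 with h1 | h1
        · exact pow_eq_zero_iff (by norm_num) |>.mp h1
        · exact absurd h1 (hCne j)
    obtain ⟨u₀, hu₀⟩ := IsAlgClosed.exists_pow_nat_eq
      (P.rep j₀ ^ 2 * ∏ m ∈ s.erase j₀, (lam j₀ - lam m)) two_pos
    have hu₀ne : u₀ ≠ 0 := by
      intro h; apply ht'ne; rw [← hu₀, h]; ring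
    have hsq : ∀ j ∈ s, P.rep j ^ 2 = (u₀ * w j) ^ 2 := by
      intro j hj
      have h1 := hconst j hj
      have h2 : P.rep j ^ 2 = (P.rep j₀ ^ 2 * ∏ m ∈ s.erase j₀, (lam j₀ - lam m))
          * (∏ m ∈ s.erase j, (lam j - lam m))⁻¹ :=
        (eq_mul_inv_iff_mul_eq₀ (hCne j)).mpr h1
      rw [h2, mul_pow, hw2 j, hu₀]
    set u : ℂ := if P.rep j₀ = u₀ * w j₀ then u₀ else -u₀ with hu
    have hune : u ≠ 0 := by
      rw [hu]; split <;> simpa using hu₀ne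
    have huj₀ : P.rep j₀ = u * w j₀ := by
      rw [hu]; split
      · assumption
      · rcases sq_cases (hsq j₀ hj₀s) with h1 | h1
        · tauto
        · rw [h1]; ring
    have husq : ∀ j ∈ s, P.rep j ^ 2 = (u * w j) ^ 2 := by
      intro j hj
      rw [hsq j hj, hu]; split <;> ring
    set εf : Fin (n + 1) → ℤˣ :=
      fun j => if j = i then 1 else if P.rep j = u * w j then 1 else -1 with hεf
    refine ⟨⟨εf, by simp [hεf], by simp [hεf, hj₀i, huj₀]⟩, ?_⟩
    have hmk : Projectivization.mk ℂ P.rep P.rep_nonzero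
        = Projectivization.mk ℂ (Φ εf) (hΦne εf) := by
      rw [Projectivization.mk_eq_mk_iff]
      refine ⟨Units.mk0 u hune, ?_⟩
      funext j
      simp only [Units.smul_def, Units.val_mk0, Pi.smul_apply, smul_eq_mul]
      rcases eq_or_ne j i with rfl | hji
      · simp [hΦ, hPi]
      · have hjs : j ∈ s := Finset.mem_erase.mpr ⟨hji, Finset.mem_univ j⟩
        by_cases hc : P.rep j = u * w j
        · simp [hΦ, hεf, if_neg hji, hc]
        · have hneg : P.rep j = -(u * w j) := by
            rcases sq_cases (husq j hjs) with h1 | h1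
            · tauto
            · exact h1
          simp only [hΦ, hεf, if_neg hji, if_neg hc]
          rw [hneg]
          push_cast
          ring
    show Projectivization.mk ℂ (Φ εf) (hΦne εf) = P
    exact hmk.symm.trans (Projectivization.mk_rep P)
  have hSeq : {P ∈ humbertEdge n lam | P.rep i = 0} = Set.range F := by
    apply Set.Subset.antisymm
    · intro P hP
      obtain ⟨ε, hε⟩ := hcover P hP
      exact ⟨ε, hε⟩
    · rintro _ ⟨ε, rfl⟩
      exact hmem ε.1
  have hcardD : Nat.card {ε : Fin (n + 1) → ℤˣ // ε i = 1 ∧ ε j₀ = 1} = 2 ^ (n - 1) := by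
    let e : {ε : Fin (n + 1) → ℤˣ // ε i = 1 ∧ ε j₀ = 1} ≃ ({j // j ∈ s.erase j₀} → ℤˣ) :=
      { toFun := fun ε j => ε.1 j.1
        invFun := fun f => ⟨fun j => if h : j ∈ s.erase j₀ then f ⟨j, h⟩ else 1,
          by simp [hs, Finset.mem_erase], by simp [Finset.mem_erase]⟩
        left_inv := by
          rintro ⟨ε, hεi, hεj₀⟩
          apply Subtype.ext
          funext j
          by_cases h : j ∈ s.erase j₀
          · simp [h]
          · have h2 : j = j₀ ∨ j = i := by
              simp only [hs, Finset.mem_erase, Finset.mem_univ, and_true] at h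
              tauto
            rcases h2 with rfl | rfl <;> simp [h, hεi, hεj₀]
        right_inv := fun f => by
          funext j
          simp [j.2] }
    rw [Nat.card_eq_fintype_card, Fintype.card_congr e, Fintype.card_fun]
    have hcc : Fintype.card {j // j ∈ s.erase j₀} = n - 1 := by
      rw [Fintype.card_coe, Finset.card_erase_of_mem hj₀s, hscard]
    rw [hcc, Fintype.card_units_int]
  constructor
  · rw [hSeq]
    exact Set.finite_range F
  · rw [hSeq, ← Set.image_univ, Set.ncard_image_of_injective _ hFinj, Set.ncard_univ,
      hcardD]
end

section
/- Let n ≥ 2 and let λ_0, …, λ_n be pairwise distinct complex numbers. For any two distinct indices i, j ∈ {0, …, n}, there is no point [x_0 : ⋯ : x_n] of the Humbert–Edge curve C of type n with x_i = 0 and x_j = 0. -/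
/-- Let `n ≥ 2` and `λ_0, …, λ_n` pairwise distinct complex numbers.  For
any two distinct indices `i ≠ j`, there is no point of the Humbert–Edge curve `C` of type
`n` whose `i`-th and `j`-th homogeneous coordinates both vanish: the fixed loci on `C` of
the involutions `σ_0, …, σ_n` are pairwise disjoint. -/
theorem stmt_5 (n : ℕ) (hn : 2 ≤ n) (lam : Fin (n + 1) → ℂ)
    (hlam : Function.Injective lam) (i j : Fin (n + 1)) (hij : i ≠ j) :
    ¬ ∃ P ∈ humbertEdge n lam, P.rep i = 0 ∧ P.rep j = 0 := by
  rintro ⟨P, hP, hxi, hxj⟩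
  set x := P.rep with hx
  -- the complement of {i, j} has cardinality n - 1
  set S : Finset (Fin (n + 1)) := ({i, j} : Finset (Fin (n + 1)))ᶜ with hS
  have hcard : S.card = n - 1 := by
    rw [hS, Finset.card_compl, Finset.card_pair hij]
    simp [Fintype.card_fin]
  set e := S.orderIsoOfFin hcard with he
  -- the restricted Vandermonde system
  have key : ∀ k : Fin (n - 1),
      ∑ m : Fin (n - 1), (fun m => x (e m : Fin (n + 1)) ^ 2) m *
        (fun m => lam (e m : Fin (n + 1))) m ^ (k : ℕ) = 0 := by
    intro k
    have hk : (k : ℕ) < n - 1 := k.2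
    have hsum := hP (k : ℕ) hk
    have hsplit : ∑ m ∈ S, lam m ^ (k : ℕ) * x m ^ 2 = 0 := by
      have := Finset.sum_compl_add_sum ({i, j} : Finset (Fin (n + 1)))
        (fun m => lam m ^ (k : ℕ) * x m ^ 2)
      rw [← hS] at this
      have hpair : ∑ m ∈ ({i, j} : Finset (Fin (n + 1))),
          lam m ^ (k : ℕ) * x m ^ 2 = 0 := by
        rw [Finset.sum_pair hij, hxi, hxj]
        ring
      rw [hpair, add_zero] at this
      rw [this, hsum]
    calc ∑ m : Fin (n - 1), x (e m : Fin (n + 1)) ^ 2 * lam (e m : Fin (n + 1)) ^ (k : ℕ)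
        = ∑ m ∈ S, x m ^ 2 * lam m ^ (k : ℕ) := by
          rw [← Finset.sum_attach S (fun m => x m ^ 2 * lam m ^ (k : ℕ))]
          exact Fintype.sum_equiv e.toEquiv _ _ (fun m => rfl)
      _ = ∑ m ∈ S, lam m ^ (k : ℕ) * x m ^ 2 := by
          exact Finset.sum_congr rfl (fun m _ => mul_comm _ _)
      _ = 0 := hsplit
  have hinj : Function.Injective (fun m : Fin (n - 1) => lam (e m : Fin (n + 1))) := by
    intro a b hab
    have := hlam hab
    exact e.injective (Subtype.ext this)
  have hzero := Matrix.eq_zero_of_forall_pow_sum_mul_pow_eq_zero hinj key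
  -- all coordinates of x vanish
  have hall : x = 0 := by
    funext m
    by_cases hm : m ∈ ({i, j} : Finset (Fin (n + 1)))
    · rcases Finset.mem_insert.mp hm with h | h
      · rw [h]; exact hxi
      · rw [Finset.mem_singleton.mp h]; exact hxj
    · have hmS : m ∈ S := by rw [hS]; exact Finset.mem_compl.mpr hm
      have : x (e (e.symm ⟨m, hmS⟩) : Fin (n + 1)) ^ 2 = 0 := congrFun hzero (e.symm ⟨m, hmS⟩)
      rw [e.apply_symm_apply] at this
      have : x m ^ 2 = 0 := this
      exact pow_eq_zero_iff (by norm_num) |>.mp this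
  exact P.rep_nonzero hall
end

section
/- Let n ≥ 2 and let λ_0, …, λ_n be pairwise distinct complex numbers. Let sq : ℙ(ℂ^{n+1}) → ℙ(ℂ^{n+1}) be the (well-defined) map sending [x_0 : ⋯ : x_n] to [x_0² : ⋯ : x_n²]. Then the image of the Humbert–Edge curve C of type n under sq is exactly the set L = {[y_0 : ⋯ : y_n] ∈ ℙ(ℂ^{n+1}) : ∑_{i=0}^n λ_i^k y_i = 0 for every k = 0, …, n−2}; moreover L is the projectivization of a 2-dimensional linear subspace of ℂ^{n+1} (namely the kernel of the (n−1) × (n+1) Vandermonde matrix (λ_i^k), which has rank n−1), hence L is a projective line. -/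
/-- The squaring map `sq : ℙ(ℂ^{n+1}) → ℙ(ℂ^{n+1})`, `[x_0 : ⋯ : x_n] ↦ [x_0² : ⋯ : x_n²]`. -/
noncomputable def sqMap (n : ℕ) (P : Projectivization ℂ (Fin (n + 1) → ℂ)) :
    Projectivization ℂ (Fin (n + 1) → ℂ) :=
  Projectivization.mk ℂ (fun i => P.rep i ^ 2) (by
    intro h
    apply P.rep_nonzero
    funext i
    have h2 := congrFun h i
    simp only [Pi.zero_apply, pow_eq_zero_iff, ne_eq, OfNat.ofNat_ne_zero,
      not_false_iff] at h2
    simpa using h2)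

open Matrix

section PowerMatrix

variable {K : Type*} [Field K] {r m : ℕ}

lemma mem_ker_mulVecLin_of_pow_iff {R : Type*} [CommSemiring R] {v y : Fin m → R} :
    y ∈ LinearMap.ker (Matrix.of fun (k : Fin r) (i : Fin m) => v i ^ (k : ℕ)).mulVecLin ↔
      ∀ k < r, ∑ i, v i ^ k * y i = 0 := by
  simp only [LinearMap.mem_ker, mulVecLin_apply, funext_iff, mulVec, dotProduct, of_apply,
    Pi.zero_apply]
  exact ⟨fun h k hk => h ⟨k, hk⟩, fun h k => h k k.isLt⟩

lemma linearIndependent_row_of_pow {v : Fin m → K} (hv : Function.Injective v) (hr : r ≤ m) :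
    LinearIndependent K (Matrix.of fun (k : Fin r) (i : Fin m) => v i ^ (k : ℕ)).row :=
  (linearIndependent_cols_of_det_ne_zero (det_vandermonde_ne_zero_iff.2 hv)).comp
    (Fin.castLE hr) (Fin.castLE_injective hr)

lemma rank_of_pow {v : Fin m → K} (hv : Function.Injective v) (hr : r ≤ m) :
    (Matrix.of fun (k : Fin r) (i : Fin m) => v i ^ (k : ℕ)).rank = r :=
  (linearIndependent_row_of_pow hv hr).rank_matrix.trans (Fintype.card_fin r)

end PowerMatrix

lemma Matrix.rank_add_finrank_ker_mulVecLin {K ι κ : Type*} [Field K] [Fintype κ]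
    (A : Matrix ι κ K) :
    A.rank + Module.finrank K (LinearMap.ker A.mulVecLin) = Fintype.card κ := by
  rw [Matrix.rank, LinearMap.finrank_range_add_finrank_ker, Module.finrank_fintype_fun_eq_card]

lemma Projectivization.rep_mk_mem_iff {K V : Type*} [Field K] [AddCommGroup V] [Module K V]
    {v : V} (hv : v ≠ 0) (W : Submodule K V) : (Projectivization.mk K v hv).rep ∈ W ↔ v ∈ W := by
  obtain ⟨a, ha⟩ := Projectivization.exists_smul_eq_mk_rep K v hv
  rw [← ha, Submodule.smul_mem_iff']

section SqMap

variable (n : ℕ)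

lemma sqMap_mk (x : Fin (n + 1) → ℂ) (hx : x ≠ 0) (hx2 : (fun i => x i ^ 2) ≠ 0) :
    sqMap n (Projectivization.mk ℂ x hx) = Projectivization.mk ℂ (fun i => x i ^ 2) hx2 := by
  obtain ⟨a, ha⟩ := Projectivization.exists_smul_eq_mk_rep ℂ x hx
  rw [sqMap, Projectivization.mk_eq_mk_iff]
  refine ⟨a ^ 2, funext fun i => ?_⟩
  simp only [← ha, Pi.smul_apply, Units.smul_def, smul_eq_mul, Units.val_pow_eq_pow_val, mul_pow]

lemma sq_rep_mem_iff (P : Projectivization ℂ (Fin (n + 1) → ℂ))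
    (W : Submodule ℂ (Fin (n + 1) → ℂ)) :
    (fun i => P.rep i ^ 2) ∈ W ↔ (sqMap n P).rep ∈ W :=
  (Projectivization.rep_mk_mem_iff _ W).symm

lemma sqMap_surjective : Function.Surjective (sqMap n) := by
  intro Q
  choose x hx using fun i => IsAlgClosed.exists_pow_nat_eq (Q.rep i) two_pos
  have hsq : (fun i => x i ^ 2) = Q.rep := funext hx
  have hx0 : x ≠ 0 := by
    rintro rfl
    exact Q.rep_nonzero (by rw [← hsq]; ext; simp)
  refine ⟨Projectivization.mk ℂ x hx0, ?_⟩
  rw [sqMap_mk n x hx0 (hsq ▸ Q.rep_nonzero)]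
  simp_rw [hsq, Projectivization.mk_rep]

end SqMap

/-- Let `n ≥ 2` and `λ_0, …, λ_n` pairwise distinct complex numbers.  The
squaring map `sq` is well defined (`sq [x] = [x²]` for any representative `x`), and the
image of the Humbert–Edge curve `C` of type `n` under `sq` is exactly the set
`L = {[y] : ∑ i, λ_i^k y_i = 0 for k = 0, …, n-2}`.  Moreover `L` is the projectivization
of the 2-dimensional linear subspace `ker V ⊆ ℂ^{n+1}`, where `V` is the
`(n-1) × (n+1)` Vandermonde matrix `(λ_i^k)`, which has rank `n-1`; hence `L` is a
projective line. -/
theorem stmt_6 (n : ℕ) (hn : 2 ≤ n) (lam : Fin (n + 1) → ℂ)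
    (hlam : Function.Injective lam) :
    (∀ (x : Fin (n + 1) → ℂ) (hx : x ≠ 0) (hx2 : (fun i => x i ^ 2) ≠ 0),
      sqMap n (Projectivization.mk ℂ x hx)
        = Projectivization.mk ℂ (fun i => x i ^ 2) hx2) ∧
    sqMap n '' humbertEdge n lam
      = {Q : Projectivization ℂ (Fin (n + 1) → ℂ) |
          ∀ k < n - 1, ∑ i, lam i ^ k * Q.rep i = 0} ∧
    (Matrix.of fun (k : Fin (n - 1)) (i : Fin (n + 1)) => lam i ^ (k : ℕ)).rank = n - 1 ∧
    Module.finrank ℂ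
        (LinearMap.ker
          (Matrix.mulVecLin
            (Matrix.of fun (k : Fin (n - 1)) (i : Fin (n + 1)) => lam i ^ (k : ℕ)))) = 2 ∧
    (∀ Q : Projectivization ℂ (Fin (n + 1) → ℂ),
      (∀ k < n - 1, ∑ i, lam i ^ k * Q.rep i = 0) ↔
        Q.rep ∈ LinearMap.ker
          (Matrix.mulVecLin
            (Matrix.of fun (k : Fin (n - 1)) (i : Fin (n + 1)) => lam i ^ (k : ℕ)))) := by
  set V := Matrix.of fun (k : Fin (n - 1)) (i : Fin (n + 1)) => lam i ^ (k : ℕ)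
  have hker (y : Fin (n + 1) → ℂ) :
      y ∈ LinearMap.ker V.mulVecLin ↔ ∀ k < n - 1, ∑ i, lam i ^ k * y i = 0 :=
    mem_ker_mulVecLin_of_pow_iff
  have hrank : V.rank = n - 1 := rank_of_pow hlam (by omega)
  have hcurve : humbertEdge n lam = sqMap n ⁻¹' {Q | Q.rep ∈ LinearMap.ker V.mulVecLin} := by
    ext P
    exact (hker _).symm.trans (sq_rep_mem_iff n P _)
  refine ⟨sqMap_mk n, ?_, hrank, ?_, fun Q => (hker Q.rep).symm⟩
  · rw [hcurve, Set.image_preimage_eq _ (sqMap_surjective n)]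
    ext Q
    exact hker Q.rep
  · have := V.rank_add_finrank_ker_mulVecLin
    rw [hrank, Fintype.card_fin] at this
    omega
end

section
/- Let n ≥ 2 and let λ_0, …, λ_n be pairwise distinct complex numbers, and set L = {[y_0 : ⋯ : y_n] ∈ ℙ(ℂ^{n+1}) : ∑_{i=0}^n λ_i^k y_i = 0 for every k = 0, …, n−2}. Then for each index i ∈ {0, …, n} there is exactly one point [y] ∈ L with y_i = 0, and this point satisfies y_j ≠ 0 for every j ≠ i. Consequently the n+1 points of L obtained in this way (one for each i) are pairwise distinct. -/
/-- The projective line `L ⊂ ℙ(ℂ^{n+1})` cut out by the linear equations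
`∑ i, λ_i^k y_i = 0` for `k = 0, …, n-2`; it is the image of the Humbert–Edge curve of
type `n` under the squaring map. -/
def humbertLine (n : ℕ) (lam : Fin (n + 1) → ℂ) :
    Set (Projectivization ℂ (Fin (n + 1) → ℂ)) :=
  {Q | ∀ k < n - 1, ∑ i, lam i ^ k * Q.rep i = 0}

/-!
The conditions `∑ j, λ_j^k y_j = 0` for `k < m` say that `∑ j, y_j p(λ_j) = 0` for every
polynomial `p` of degree `< m`. Pairing `y` with the nodal polynomial of all but one point of
its support shows that a solution supported on at most `m` coordinates vanishes. For
`m = n - 1` and `n + 1` coordinates, a solution vanishing at two coordinates is therefore zero.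
Hence the solutions with `y_i = 0` form a line (it is nonzero by counting dimensions), and each
of its nonzero points has all other coordinates nonzero.
-/

open Polynomial Finset

namespace Moments

variable {K ι : Type*} [Field K] [Fintype ι]

def momentMap (lam : ι → K) (m : ℕ) : (ι → K) →ₗ[K] (Fin m → K) :=
  (Matrix.of fun (k : Fin m) (j : ι) => lam j ^ (k : ℕ)).mulVecLin

variable {lam : ι → K} {m : ℕ} {y : ι → K}

theorem mem_ker_momentMap :
    y ∈ LinearMap.ker (momentMap lam m) ↔ ∀ k < m, ∑ j, lam j ^ k * y j = 0 := by
  simp [momentMap, funext_iff, Fin.forall_iff, Matrix.mulVec, dotProduct]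

theorem sum_mul_eval_eq_zero (hy : y ∈ LinearMap.ker (momentMap lam m)) {p : K[X]}
    (hp : p.natDegree < m) : ∑ j, y j * p.eval (lam j) = 0 := by
  simp_rw [eval_eq_sum_range' hp, Finset.mul_sum, Finset.sum_comm (γ := ι)]
  refine Finset.sum_eq_zero fun k hk => ?_
  calc ∑ j, y j * (p.coeff k * lam j ^ k) = p.coeff k * ∑ j, lam j ^ k * y j := by
        rw [Finset.mul_sum]; exact Finset.sum_congr rfl fun j _ => by ring
    _ = 0 := by rw [mem_ker_momentMap.1 hy k (Finset.mem_range.1 hk), mul_zero]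

theorem eq_zero_of_support_subset (hlam : Function.Injective lam)
    (hy : y ∈ LinearMap.ker (momentMap lam m)) {S : Finset ι} (hS : #S ≤ m)
    (hyS : ∀ j ∉ S, y j = 0) : y = 0 := by
  classical
  funext j₀
  by_cases hj₀ : j₀ ∈ S
  swap
  · exact hyS j₀ hj₀
  set p := Lagrange.nodal (S.erase j₀) lam
  have hdeg : p.natDegree < m := by
    rw [Lagrange.natDegree_nodal, Finset.card_erase_of_mem hj₀]
    have := Finset.card_pos.2 ⟨j₀, hj₀⟩
    omega
  have hp₀ : p.eval (lam j₀) ≠ 0 :=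
    Lagrange.eval_nodal_not_at_node fun l hl => hlam.ne (Finset.ne_of_mem_erase hl).symm
  have hsingle : ∑ j, y j * p.eval (lam j) = y j₀ * p.eval (lam j₀) := by
    refine Finset.sum_eq_single j₀ (fun j _ hj => ?_) (by simp)
    by_cases hjS : j ∈ S
    · rw [Lagrange.eval_nodal_at_node (Finset.mem_erase.2 ⟨hj, hjS⟩), mul_zero]
    · rw [hyS j hjS, zero_mul]
  rw [sum_mul_eval_eq_zero hy hdeg] at hsingle
  exact (mul_eq_zero.1 hsingle.symm).resolve_right hp₀

theorem eq_zero_of_apply_eq_zero_of_apply_eq_zero (hlam : Function.Injective lam)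
    (hcard : Fintype.card ι ≤ m + 2) (hy : y ∈ LinearMap.ker (momentMap lam m)) {i j : ι}
    (hij : i ≠ j) (hi : y i = 0) (hj : y j = 0) : y = 0 := by
  classical
  refine eq_zero_of_support_subset hlam hy (S := (univ.erase i).erase j) ?_ fun l hl => ?_
  · rw [Finset.card_erase_of_mem (by simpa using hij.symm), Finset.card_erase_of_mem
      (Finset.mem_univ i), Finset.card_univ]
    omega
  · by_cases hlj : l = j
    · exact hlj ▸ hj
    · simp only [Finset.mem_erase, Finset.mem_univ, and_true, not_and, not_not] at hl
      exact hl hlj ▸ hi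

theorem exists_ne_zero_mem_ker_apply_eq_zero (hcard : m + 1 < Fintype.card ι) (i : ι) :
    ∃ y ≠ 0, y ∈ LinearMap.ker (momentMap lam m) ∧ y i = 0 := by
  have hker : LinearMap.ker ((momentMap lam m).prod (LinearMap.proj i)) ≠ ⊥ :=
    LinearMap.ker_ne_bot_of_finrank_lt (by simpa using hcard)
  obtain ⟨y, hy, hy0⟩ := (Submodule.ne_bot_iff _).1 hker
  rw [LinearMap.ker_prod] at hy
  exact ⟨y, hy0, hy.1, hy.2⟩

theorem eq_of_rep_apply_eq_zero (hlam : Function.Injective lam)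
    (hcard : Fintype.card ι ≤ m + 2) {P Q : Projectivization K (ι → K)}
    (hP : P.rep ∈ LinearMap.ker (momentMap lam m)) (hQ : Q.rep ∈ LinearMap.ker (momentMap lam m))
    {i : ι} (hPi : P.rep i = 0) (hQi : Q.rep i = 0) : P = Q := by
  obtain ⟨j, hPj⟩ := Function.ne_iff.1 P.rep_nonzero
  have hij : i ≠ j := by rintro rfl; exact hPj hPi
  by_contra hPQ
  -- `Q_j P - P_j Q` solves the equations and vanishes at `i` and `j`.
  have hz := eq_zero_of_apply_eq_zero_of_apply_eq_zero hlam hcard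
    (add_mem (Submodule.smul_mem _ (Q.rep j) hP) (Submodule.smul_mem _ (-P.rep j) hQ)) hij
    (by simp [hPi, hQi]) (by simp [mul_comm])
  exact hPj (neg_eq_zero.1
    ((LinearIndependent.pair_iff.1 (Projectivization.linearIndependent_pair_iff_ne.2 hPQ)) _ _ hz).2)

end Moments

open Moments

/-- Let `n ≥ 2` and `λ_0, …, λ_n` pairwise distinct complex numbers.  For
each index `i` there is exactly one point `[y] ∈ L` with `y_i = 0`; this point satisfies
`y_j ≠ 0` for every `j ≠ i`; consequently the `n+1` points of `L` obtained in this way are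
pairwise distinct. -/
theorem stmt_8 (n : ℕ) (hn : 2 ≤ n) (lam : Fin (n + 1) → ℂ)
    (hlam : Function.Injective lam) :
    (∀ i : Fin (n + 1), ∃! Q : Projectivization ℂ (Fin (n + 1) → ℂ),
      Q ∈ humbertLine n lam ∧ Q.rep i = 0) ∧
    (∀ i : Fin (n + 1), ∀ Q ∈ humbertLine n lam, Q.rep i = 0 →
      ∀ j, j ≠ i → Q.rep j ≠ 0) ∧
    (∀ i j : Fin (n + 1), i ≠ j →
      ∀ Q ∈ humbertLine n lam, ∀ Q' ∈ humbertLine n lam,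
        Q.rep i = 0 → Q'.rep j = 0 → Q ≠ Q') := by
  have hcard : Fintype.card (Fin (n + 1)) = n - 1 + 2 := by simp; omega
  have nonvanishing : ∀ i : Fin (n + 1), ∀ Q ∈ humbertLine n lam, Q.rep i = 0 →
      ∀ j, j ≠ i → Q.rep j ≠ 0 := fun i Q hQ hi j hji hj =>
    Q.rep_nonzero (eq_zero_of_apply_eq_zero_of_apply_eq_zero hlam hcard.le
      (mem_ker_momentMap.2 hQ) hji.symm hi hj)
  refine ⟨fun i => ?_, nonvanishing, ?_⟩
  · obtain ⟨v, hv0, hv, hvi⟩ := exists_ne_zero_mem_ker_apply_eq_zero (lam := lam) (m := n - 1)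
      (by rw [hcard]; omega) i
    obtain ⟨a, ha⟩ := Projectivization.exists_smul_eq_mk_rep ℂ v hv0
    have hrep : (Projectivization.mk ℂ v hv0).rep ∈ LinearMap.ker (momentMap lam (n - 1)) :=
      ha ▸ Submodule.smul_mem _ _ hv
    refine ⟨Projectivization.mk ℂ v hv0, ⟨mem_ker_momentMap.1 hrep, by simp [← ha, hvi]⟩, ?_⟩
    rintro Q ⟨hQ, hQi⟩
    exact eq_of_rep_apply_eq_zero hlam hcard.le (mem_ker_momentMap.2 hQ) hrep hQi
      (by simp [← ha, hvi])
  · rintro i j hij Q hQ Q' - hQi hQ'j rfl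
    exact nonvanishing i Q hQ hQi j hij.symm hQ'j
end

section
/- Let n ≥ 3 and let λ_0, …, λ_n be pairwise distinct complex numbers. Then: (a) no point [x_0 : ⋯ : x_n] of the Humbert–Edge curve C of type n has x_0 = x_1 = ⋯ = x_{n−1} = 0, so the projection p : [x_0 : ⋯ : x_n] ↦ [x_0 : ⋯ : x_{n−1}] ∈ ℙ(ℂ^n) is well defined on C; and (b) the image p(C) is exactly the set C′ = {[y_0 : ⋯ : y_{n−1}] ∈ ℙ(ℂ^n) : ∑_{i=0}^{n−1} (λ_i − λ_n)·λ_i^k·y_i² = 0 for every k = 0, …, n−3}. -/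
/-- Quadric sums are homogeneous under scaling by a unit. -/
lemma sum_sq_smul {m : ℕ} (c : Fin m → ℂ) (a : ℂ) (x : Fin m → ℂ) :
    ∑ i, c i * (a • x) i ^ 2 = a ^ 2 * ∑ i, c i * x i ^ 2 := by
  rw [Finset.mul_sum]
  refine Finset.sum_congr rfl fun i _ => ?_
  simp only [Pi.smul_apply, smul_eq_mul]
  ring

lemma rep_mk_rel {m : ℕ} (x : Fin m → ℂ) (hx : x ≠ 0) :
    ∃ a : ℂˣ, (a : ℂ) • x = (Projectivization.mk ℂ x hx).rep := by
  have h := Projectivization.mk_rep (Projectivization.mk ℂ x hx)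
  rw [Projectivization.mk_eq_mk_iff] at h
  obtain ⟨a, ha⟩ := h
  exact ⟨a, ha⟩

/-- Let `n ≥ 3` and `λ_0, …, λ_n` pairwise distinct complex numbers.
(a) No point of the Humbert–Edge curve `C` of type `n` has `x_0 = ⋯ = x_{n-1} = 0`, so the
projection `p : [x_0 : ⋯ : x_n] ↦ [x_0 : ⋯ : x_{n-1}]` is well defined on `C`; and
(b) the image `p(C)` is exactly the set
`C' = {[y_0 : ⋯ : y_{n-1}] : ∑_{i<n} (λ_i - λ_n) λ_i^k y_i² = 0 for k = 0, …, n-3}`. -/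
theorem stmt_9 (n : ℕ) (hn : 3 ≤ n) (lam : Fin (n + 1) → ℂ)
    (hlam : Function.Injective lam) :
    (∀ P ∈ humbertEdge n lam, ∃ i : Fin n, P.rep (Fin.castSucc i) ≠ 0) ∧
    {Q : Projectivization ℂ (Fin n → ℂ) |
        ∃ (x : Fin (n + 1) → ℂ) (hx : x ≠ 0),
          Projectivization.mk ℂ x hx ∈ humbertEdge n lam ∧
          ∃ h' : (fun i : Fin n => x (Fin.castSucc i)) ≠ 0,
            Q = Projectivization.mk ℂ (fun i : Fin n => x (Fin.castSucc i)) h'}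
      = {Q : Projectivization ℂ (Fin n → ℂ) |
          ∀ k < n - 2, ∑ i : Fin n,
            (lam (Fin.castSucc i) - lam (Fin.last n)) * lam (Fin.castSucc i) ^ k
              * Q.rep i ^ 2 = 0} := by
  constructor
  · -- part (a)
    intro P hP
    by_contra hcon
    push_neg at hcon
    have h0 := hP 0 (by omega)
    rw [Fin.sum_univ_castSucc] at h0
    simp only [hcon, pow_zero, one_mul] at h0
    have hlast : P.rep (Fin.last n) = 0 := by
      have : P.rep (Fin.last n) ^ 2 = 0 := by
        simpa using h0
      exact pow_eq_zero_iff (by norm_num) |>.mp this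
    apply P.rep_nonzero
    funext i
    induction i using Fin.lastCases with
    | last => exact hlast
    | cast i => exact hcon i
  · ext Q
    simp only [Set.mem_setOf_eq]
    constructor
    · -- forward inclusion
      rintro ⟨x, hx, hC, h', rfl⟩
      intro k hk
      -- relate rep of the projected point to the restricted vector
      obtain ⟨a, ha⟩ := rep_mk_rel (fun i : Fin n => x (Fin.castSucc i)) h'
      rw [← ha, sum_sq_smul]
      -- relate rep of the full point to x
      obtain ⟨b, hb⟩ := rep_mk_rel x hx
      have hS : ∀ m < n - 1, ∑ i, lam i ^ m * x i ^ 2 = 0 := by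
        intro m hm
        have := hC m hm
        rw [← hb, sum_sq_smul] at this
        exact (mul_eq_zero.mp this).resolve_left (pow_ne_zero 2 b.ne_zero)
      have key : ∑ i : Fin n,
          (lam (Fin.castSucc i) - lam (Fin.last n)) * lam (Fin.castSucc i) ^ k
            * x (Fin.castSucc i) ^ 2 = 0 := by
        have e1 := hS (k + 1) (by omega)
        have e2 := hS k (by omega)
        rw [Fin.sum_univ_castSucc] at e1 e2
        have expand : ∀ i : Fin n,
            (lam (Fin.castSucc i) - lam (Fin.last n)) * lam (Fin.castSucc i) ^ k
              * x (Fin.castSucc i) ^ 2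
            = lam (Fin.castSucc i) ^ (k + 1) * x (Fin.castSucc i) ^ 2
              - lam (Fin.last n) * (lam (Fin.castSucc i) ^ k * x (Fin.castSucc i) ^ 2) := by
          intro i; ring
        rw [Finset.sum_congr rfl fun i _ => expand i, Finset.sum_sub_distrib,
          ← Finset.mul_sum]
        have e1' : ∑ i : Fin n, lam (Fin.castSucc i) ^ (k + 1) * x (Fin.castSucc i) ^ 2
            = - (lam (Fin.last n) ^ (k + 1) * x (Fin.last n) ^ 2) := by linear_combination e1
        have e2' : ∑ i : Fin n, lam (Fin.castSucc i) ^ k * x (Fin.castSucc i) ^ 2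
            = - (lam (Fin.last n) ^ k * x (Fin.last n) ^ 2) := by linear_combination e2
        rw [e1', e2']
        ring
      rw [key, mul_zero]
    · -- reverse inclusion
      intro hQ
      set y : Fin n → ℂ := Q.rep with hy
      obtain ⟨t, ht⟩ := IsAlgClosed.exists_pow_nat_eq (-∑ i, y i ^ 2) (n := 2) (by norm_num)
      set x : Fin (n + 1) → ℂ := Fin.snoc y t with hxdef
      have hrestr : (fun i : Fin n => x (Fin.castSucc i)) = y := by
        funext i; simp [hxdef, Fin.snoc_castSucc]
      have hx : x ≠ 0 := by
        intro h0
        apply Q.rep_nonzero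
        funext i
        have h1 := congrFun hrestr i
        rw [h0] at h1
        simpa using h1.symm
      have h' : (fun i : Fin n => x (Fin.castSucc i)) ≠ 0 := by
        rw [hrestr]; exact Q.rep_nonzero
      refine ⟨x, hx, ?_, h', ?_⟩
      · -- membership in the Humbert–Edge curve
        intro k hk
        obtain ⟨b, hb⟩ := rep_mk_rel x hx
        rw [← hb, sum_sq_smul]
        have key : ∀ m, m < n - 1 → ∑ i, lam i ^ m * x i ^ 2 = 0 := by
          intro m
          induction m with
          | zero =>
            intro _
            rw [Fin.sum_univ_castSucc]
            simp only [pow_zero, one_mul, hxdef, Fin.snoc_castSucc, Fin.snoc_last]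
            rw [ht]; ring
          | succ m ih =>
            intro hm
            have hS := ih (by omega)
            have hQm := hQ m (by omega)
            rw [Fin.sum_univ_castSucc] at hS ⊢
            simp only [hxdef, Fin.snoc_castSucc, Fin.snoc_last] at hS ⊢
            have expand : ∀ i : Fin n,
                (lam (Fin.castSucc i) - lam (Fin.last n)) * lam (Fin.castSucc i) ^ m
                  * y i ^ 2
                = lam (Fin.castSucc i) ^ (m + 1) * y i ^ 2
                  - lam (Fin.last n) * (lam (Fin.castSucc i) ^ m * y i ^ 2) := by
              intro i; ring
            rw [Finset.sum_congr rfl fun i _ => expand i, Finset.sum_sub_distrib,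
              ← Finset.mul_sum] at hQm
            have hSm : ∑ i : Fin n, lam (Fin.castSucc i) ^ m * y i ^ 2
                = - (lam (Fin.last n) ^ m * t ^ 2) := by linear_combination hS
            rw [hSm] at hQm
            linear_combination hQm
        exact mul_eq_zero_of_right _ (key k hk)
      · -- the projected point is Q
        have : Projectivization.mk ℂ (fun i : Fin n => x (Fin.castSucc i)) h' = Q := by
          conv_rhs => rw [← Q.mk_rep]
          rw [Projectivization.mk_eq_mk_iff]
          exact ⟨1, by simp [hrestr, hy]⟩
        exact this.symm
end

section
/- Let n ≥ 3 and let λ_0, …, λ_n be pairwise distinct complex numbers, and let p : [x_0 : ⋯ : x_n] ↦ [x_0 : ⋯ : x_{n−1}] be the projection (well defined on the Humbert–Edge curve C of type n). If [x] and [x′] are points of C with p([x]) = p([x′]), then either [x′] = [x] or [x′] = σ_n([x]), where σ_n([x_0 : ⋯ : x_n]) = [x_0 : ⋯ : x_{n−1} : −x_n]. In particular every fiber of p on C has at most 2 elements, and the fiber through [x] has exactly 1 element if and only if x_n = 0. -/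
/-- The involution `σ_n` of `ℙ(ℂ^{n+1})`: `[x_0 : ⋯ : x_{n-1} : x_n] ↦ [x_0 : ⋯ : x_{n-1} : -x_n]`. -/
noncomputable def sigmaLast (n : ℕ) (P : Projectivization ℂ (Fin (n + 1) → ℂ)) :
    Projectivization ℂ (Fin (n + 1) → ℂ) :=
  Projectivization.mk ℂ
    (fun i => if i = Fin.last n then -P.rep i else P.rep i) (by
      intro h
      apply P.rep_nonzero
      funext i
      have h2 := congrFun h i
      by_cases hi : i = Fin.last n
      · simp only [hi, if_pos, Pi.zero_apply, neg_eq_zero] at h2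
        simpa [hi] using h2
      · simpa [hi] using h2)

private lemma he_mk_eq {n : ℕ} {v w : Fin (n+1) → ℂ} (hv : v ≠ 0) (hw : w ≠ 0)
    {t : ℂ} (h : ∀ i, v i = t * w i) :
    Projectivization.mk ℂ v hv = Projectivization.mk ℂ w hw := by
  rw [Projectivization.mk_eq_mk_iff']
  exact ⟨t, funext fun i => by simpa using (h i).symm⟩

/-- Let `n ≥ 3` and `λ_0, …, λ_n` pairwise distinct complex numbers, and
let `p : [x_0 : ⋯ : x_n] ↦ [x_0 : ⋯ : x_{n-1}]` be the projection (well defined on the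
Humbert–Edge curve `C` of type `n`); here `p [x] = p [x']` is expressed by saying that the
truncated coordinate vectors are proportional.  If `[x], [x'] ∈ C` with `p [x] = p [x']`,
then `[x'] = [x]` or `[x'] = σ_n [x]`.  In particular every fiber of `p` on `C` has at most
`2` elements, and the fiber through `[x]` has exactly `1` element iff `x_n = 0`. -/
theorem stmt_10 (n : ℕ) (hn : 3 ≤ n) (lam : Fin (n + 1) → ℂ)
    (hlam : Function.Injective lam)
    (P : Projectivization ℂ (Fin (n + 1) → ℂ)) (hP : P ∈ humbertEdge n lam) :
    (∀ P' ∈ humbertEdge n lam,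
      (∃ t : ℂ, t ≠ 0 ∧ ∀ i : Fin n, P'.rep (Fin.castSucc i) = t * P.rep (Fin.castSucc i)) →
        P' = P ∨ P' = sigmaLast n P) ∧
    {P' ∈ humbertEdge n lam |
        ∃ t : ℂ, t ≠ 0 ∧ ∀ i : Fin n,
          P'.rep (Fin.castSucc i) = t * P.rep (Fin.castSucc i)}.ncard ≤ 2 ∧
    ({P' ∈ humbertEdge n lam |
        ∃ t : ℂ, t ≠ 0 ∧ ∀ i : Fin n,
          P'.rep (Fin.castSucc i) = t * P.rep (Fin.castSucc i)}.ncard = 1 ↔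
      P.rep (Fin.last n) = 0) := by
  classical
  have hn1 : 0 < n - 1 := by omega
  have e0 : ∑ i : Fin n, P.rep i.castSucc ^ 2 + P.rep (Fin.last n) ^ 2 = 0 := by
    have := hP 0 hn1
    simp only [pow_zero, one_mul] at this
    rwa [Fin.sum_univ_castSucc] at this
  -- the σ vector
  set σx : Fin (n+1) → ℂ := fun i => if i = Fin.last n then -P.rep i else P.rep i with hσx
  have hσne : σx ≠ 0 := by
    intro h
    apply P.rep_nonzero
    funext i
    have h2 := congrFun h i
    by_cases hi : i = Fin.last n
    · simp only [hσx, hi, if_pos, Pi.zero_apply, neg_eq_zero] at h2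
      simpa [hi] using h2
    · simpa [hσx, hi] using h2
  have hσdef : sigmaLast n P = Projectivization.mk ℂ σx hσne := rfl
  -- Key claim
  have key : ∀ P' ∈ humbertEdge n lam,
      (∃ t : ℂ, t ≠ 0 ∧ ∀ i : Fin n, P'.rep (Fin.castSucc i) = t * P.rep (Fin.castSucc i)) →
        P' = P ∨ P' = sigmaLast n P := by
    rintro P' hP' ⟨t, ht, hprop⟩
    have e0' : ∑ i : Fin n, P'.rep i.castSucc ^ 2 + P'.rep (Fin.last n) ^ 2 = 0 := by
      have := hP' 0 hn1
      simp only [pow_zero, one_mul] at this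
      rwa [Fin.sum_univ_castSucc] at this
    have hsum : ∑ i : Fin n, P'.rep i.castSucc ^ 2
        = t ^ 2 * ∑ i : Fin n, P.rep i.castSucc ^ 2 := by
      rw [Finset.mul_sum]
      exact Finset.sum_congr rfl fun i _ => by rw [hprop i]; ring
    have hfac : (P'.rep (Fin.last n) - t * P.rep (Fin.last n))
        * (P'.rep (Fin.last n) + t * P.rep (Fin.last n)) = 0 := by
      linear_combination e0' - t ^ 2 * e0 - hsum
    rcases mul_eq_zero.mp hfac with h1 | h1
    · left
      rw [← P'.mk_rep, ← P.mk_rep]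
      apply he_mk_eq (t := t)
      intro i
      induction i using Fin.lastCases with
      | last => linear_combination h1
      | cast i => exact hprop i
    · right
      rw [← P'.mk_rep, hσdef]
      apply he_mk_eq (t := t)
      intro i
      induction i using Fin.lastCases with
      | last =>
        have hs : σx (Fin.last n) = -P.rep (Fin.last n) := if_pos rfl
        rw [hs]
        linear_combination h1
      | cast i =>
        simpa [hσx, (Fin.castSucc_lt_last i).ne] using hprop i
  refine ⟨key, ?_, ?_⟩
  · -- cardinality ≤ 2
    have hsub : {P' ∈ humbertEdge n lam |
        ∃ t : ℂ, t ≠ 0 ∧ ∀ i : Fin n,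
          P'.rep (Fin.castSucc i) = t * P.rep (Fin.castSucc i)} ⊆ {P, sigmaLast n P} := by
      rintro Q ⟨hQ1, hQ2⟩
      rcases key Q hQ1 hQ2 with h | h
      · exact Or.inl h
      · exact Or.inr h
    calc _ ≤ ({P, sigmaLast n P} : Set _).ncard :=
            Set.ncard_le_ncard hsub (Set.toFinite _)
      _ ≤ ({sigmaLast n P} : Set _).ncard + 1 := Set.ncard_insert_le _ _
      _ ≤ 2 := by simp
  · -- cardinality = 1 ↔ last coordinate zero
    have hPmem : P ∈ {P' ∈ humbertEdge n lam |
        ∃ t : ℂ, t ≠ 0 ∧ ∀ i : Fin n,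
          P'.rep (Fin.castSucc i) = t * P.rep (Fin.castSucc i)} :=
      ⟨hP, 1, one_ne_zero, fun i => (one_mul _).symm⟩
    constructor
    · intro hcard
      obtain ⟨Q, hQ⟩ := Set.ncard_eq_one.mp hcard
      -- show sigmaLast n P is in the set
      obtain ⟨a, ha⟩ := Projectivization.exists_smul_eq_mk_rep ℂ σx hσne
      have hrepσ : ∀ i, (sigmaLast n P).rep i = (a : ℂ) * σx i := by
        intro i
        rw [hσdef]
        have := congrFun ha i
        simpa [Units.smul_def] using this.symm
      have hsq : ∀ i, (sigmaLast n P).rep i ^ 2 = (a : ℂ) ^ 2 * P.rep i ^ 2 := by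
        intro i
        rw [hrepσ i]
        by_cases hi : i = Fin.last n <;> simp [hσx, hi] <;> ring
      have hσC : sigmaLast n P ∈ humbertEdge n lam := by
        intro k hk
        calc ∑ i, lam i ^ k * (sigmaLast n P).rep i ^ 2
            = (a : ℂ) ^ 2 * ∑ i, lam i ^ k * P.rep i ^ 2 := by
              rw [Finset.mul_sum]
              exact Finset.sum_congr rfl fun i _ => by rw [hsq i]; ring
          _ = 0 := by rw [hP k hk, mul_zero]
      have hσmem : sigmaLast n P ∈ {P' ∈ humbertEdge n lam |
          ∃ t : ℂ, t ≠ 0 ∧ ∀ i : Fin n,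
            P'.rep (Fin.castSucc i) = t * P.rep (Fin.castSucc i)} := by
        refine ⟨hσC, (a : ℂ), a.ne_zero, fun i => ?_⟩
        rw [hrepσ]
        simp [hσx, (Fin.castSucc_lt_last i).ne]
      have hEq : sigmaLast n P = P := by
        have h1 : P = Q := by rw [← Set.mem_singleton_iff, ← hQ]; exact hPmem
        have h2 : sigmaLast n P = Q := by rw [← Set.mem_singleton_iff, ← hQ]; exact hσmem
        rw [h2, h1]
      -- deduce P.rep (last) = 0
      by_contra hxn
      have : Projectivization.mk ℂ σx hσne
          = Projectivization.mk ℂ P.rep P.rep_nonzero := by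
        rw [P.mk_rep, ← hσdef]; exact hEq
      rw [Projectivization.mk_eq_mk_iff'] at this
      obtain ⟨c, hc⟩ := this
      have hclast := congrFun hc (Fin.last n)
      simp [hσx] at hclast
      -- hclast : c * P.rep (last n) = - P.rep (last n)
      have hc1 : c = -1 := by
        rcases mul_eq_zero.mp (by linear_combination hclast : (c + 1) * P.rep (Fin.last n) = 0) with h | h
        · linear_combination h
        · exact absurd h hxn
      have hz : ∀ i : Fin n, P.rep i.castSucc = 0 := by
        intro i
        have := congrFun hc i.castSucc
        simp [hσx, (Fin.castSucc_lt_last i).ne, hc1] at this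
        linear_combination -this / 2
      apply hxn
      have : P.rep (Fin.last n) ^ 2 = 0 := by
        have hs : ∑ i : Fin n, P.rep i.castSucc ^ 2 = 0 :=
          Finset.sum_eq_zero fun i _ => by rw [hz i]; ring
        linear_combination e0 - hs
      exact pow_eq_zero_iff (by norm_num) |>.mp this
    · intro hxn
      have hσP : sigmaLast n P = P := by
        rw [hσdef, ← P.mk_rep]
        apply he_mk_eq (t := 1)
        intro i
        by_cases hi : i = Fin.last n <;> simp [hσx, hi, hxn]
      apply Set.ncard_eq_one.mpr
      refine ⟨P, Set.Subset.antisymm ?_ (by simpa using hPmem)⟩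
      rintro Q ⟨hQ1, hQ2⟩
      rcases key Q hQ1 hQ2 with h | h
      · exact h
      · rw [hσP] at h; exact h
end
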